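/- arXiv:2204.06735 — 2 statements merged into one kernel-verified Lean document; each statement's English description precedes it below -/
import Mathlib

section
/- Congruence condition for → (negative part) in L_QN4: for all formulas α₁, β₁, α₂, β₂, the set Γ₁ ∪ Γ₂, where Γᵢ = {αᵢ → βᵢ, βᵢ → αᵢ, ∼αᵢ → ∼βᵢ, ∼βᵢ → ∼αᵢ}, derives ∼(α₁ → α₂) → ∼(β₁ → β₂). -/
/-- Formulas of the logic L_QN4. -/
inductive Fm : Type
  | var  : ℕ → Fm
  | neg  : Fm → Fm
  | conj : Fm → Fm → Fm
  | disj : Fm → Fm → Fm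
  | impl : Fm → Fm → Fm

namespace Fm

/-- α ↔ β abbreviates (α → β) ∧ (β → α). -/
def iff (a b : Fm) : Fm := conj (impl a b) (impl b a)

end Fm

open Fm

/-- Derivability in the Hilbert calculus L_QN4. -/
inductive Deriv : Set Fm → Fm → Prop
  | prem {Γ : Set Fm} {α : Fm} : α ∈ Γ → Deriv Γ α
  | mp   {Γ : Set Fm} {α β : Fm} : Deriv Γ (impl α β) → Deriv Γ α → Deriv Γ β
  | ax1  (Γ : Set Fm) (α β : Fm) : Deriv Γ (impl α (impl β α))
  | ax2  (Γ : Set Fm) (α β γ : Fm) :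
      Deriv Γ (impl (impl α (impl β γ)) (impl (impl α β) (impl α γ)))
  | ax3  (Γ : Set Fm) (α β : Fm) : Deriv Γ (impl (conj α β) α)
  | ax4  (Γ : Set Fm) (α β : Fm) : Deriv Γ (impl (conj α β) β)
  | ax5  (Γ : Set Fm) (α β γ : Fm) :
      Deriv Γ (impl (impl α β) (impl (impl α γ) (impl α (conj β γ))))
  | ax6  (Γ : Set Fm) (α β : Fm) : Deriv Γ (impl α (disj α β))
  | ax7  (Γ : Set Fm) (α β : Fm) : Deriv Γ (impl β (disj α β))
  | ax8  (Γ : Set Fm) (α β γ : Fm) :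
      Deriv Γ (impl (impl α γ) (impl (impl β γ) (impl (disj α β) γ)))
  | ax9  (Γ : Set Fm) (α β : Fm) :
      Deriv Γ (Fm.iff (neg (disj α β)) (conj (neg α) (neg β)))
  | ax10 (Γ : Set Fm) (α β : Fm) :
      Deriv Γ (Fm.iff (neg (impl α β)) (neg (neg (conj α (neg β)))))
  | ax11 (Γ : Set Fm) (α β γ : Fm) :
      Deriv Γ (Fm.iff (neg (conj α (conj β γ))) (neg (conj (conj α β) γ)))
  | ax12 (Γ : Set Fm) (α β γ : Fm) :
      Deriv Γ (Fm.iff (neg (conj α (disj β γ))) (neg (disj (conj α β) (conj α γ))))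
  | ax13 (Γ : Set Fm) (α β γ : Fm) :
      Deriv Γ (Fm.iff (neg (disj α (conj β γ))) (neg (conj (disj α β) (disj α γ))))
  | ax14 (Γ : Set Fm) (α β : Fm) :
      Deriv Γ (Fm.iff (neg (neg (conj α β))) (conj (neg (neg α)) (neg (neg β))))
  | ax15 (Γ : Set Fm) (α : Fm) : Deriv Γ (impl α (neg (neg α)))
  | ax16 (Γ : Set Fm) (α : Fm) :
      Deriv Γ (impl α (impl (neg α) (neg (impl α α))))
  | ax17 (Γ : Set Fm) (α β : Fm) :
      Deriv Γ (impl (impl α β) (impl (neg (neg α)) (neg (neg β))))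
  | ax18 (Γ : Set Fm) (α β : Fm) : Deriv Γ (impl (neg α) (neg (conj α β)))
  | ax19 (Γ : Set Fm) (α β : Fm) : Deriv Γ (impl (neg (conj α β)) (neg (conj β α)))
  | ax20 (Γ : Set Fm) (α β : Fm) :
      Deriv Γ (impl (impl (neg α) (neg β)) (impl (neg (conj α β)) (neg β)))
  | ax21 (Γ : Set Fm) (α β γ θ : Fm) :
      Deriv Γ (impl (impl (neg α) (neg β))
        (impl (impl (neg γ) (neg θ))
          (impl (neg (conj α γ)) (neg (conj β θ)))))
  | ax22 (Γ : Set Fm) (α : Fm) : Deriv Γ (impl (neg (neg (neg α))) (neg α))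

/-- The set of equivalence formulas Δ(α, β). -/
def Delta (α β : Fm) : Set Fm :=
  {impl α β, impl β α, impl (neg α) (neg β), impl (neg β) (neg α)}


open Deriv in
lemma derivTrans {Γ : Set Fm} {a b c : Fm} (h1 : Deriv Γ (impl a b))
    (h2 : Deriv Γ (impl b c)) : Deriv Γ (impl a c) :=
  mp (mp (ax2 Γ a b c) (mp (ax1 Γ (impl b c) a) h2)) h1

open Deriv in
lemma derivConjMono {Γ : Set Fm} {a b c d : Fm} (h1 : Deriv Γ (impl a b))
    (h2 : Deriv Γ (impl c d)) : Deriv Γ (impl (conj a c) (conj b d)) :=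
  mp (mp (ax5 Γ (conj a c) b d) (derivTrans (ax3 Γ a c) h1))
    (derivTrans (ax4 Γ a c) h2)

open Deriv in
lemma derivIff1 {Γ : Set Fm} {a b : Fm} (h : Deriv Γ (Fm.iff a b)) :
    Deriv Γ (impl a b) := mp (ax3 Γ _ _) h

open Deriv in
lemma derivIff2 {Γ : Set Fm} {a b : Fm} (h : Deriv Γ (Fm.iff a b)) :
    Deriv Γ (impl b a) := mp (ax4 Γ _ _) h

theorem cong_impl_neg (α₁ β₁ α₂ β₂ : Fm) :
    Deriv (Delta α₁ β₁ ∪ Delta α₂ β₂)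
      (impl (neg (impl α₁ α₂)) (neg (impl β₁ β₂))) := by
  set Γ := Delta α₁ β₁ ∪ Delta α₂ β₂ with hΓ
  have p1 : Deriv Γ (impl α₁ β₁) := Deriv.prem (by simp [hΓ, Delta])
  have p2 : Deriv Γ (impl (neg α₂) (neg β₂)) := Deriv.prem (by simp [hΓ, Delta])
  have h1 : Deriv Γ (impl (neg (neg α₁)) (neg (neg β₁))) :=
    Deriv.mp (Deriv.ax17 Γ α₁ β₁) p1
  have h2 : Deriv Γ (impl (neg (neg (neg α₂))) (neg (neg (neg β₂)))) :=
    Deriv.mp (Deriv.ax17 Γ (neg α₂) (neg β₂)) p2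
  exact derivTrans (derivIff1 (Deriv.ax10 Γ α₁ α₂))
    (derivTrans (derivIff1 (Deriv.ax14 Γ α₁ (neg α₂)))
      (derivTrans (derivConjMono h1 h2)
        (derivTrans (derivIff2 (Deriv.ax14 Γ β₁ (neg β₂)))
          (derivIff2 (Deriv.ax10 Γ β₁ β₂)))))
end

section
/- For all formulas α, β, the formula ∼(α ∧ (α ∨ β)) → ∼α is a theorem of L_QN4. -/
open Fm

theorem Deriv.comp {Γ : Set Fm} {a b c : Fm}
    (h1 : Deriv Γ (impl b c)) (h2 : Deriv Γ (impl a b)) :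
    Deriv Γ (impl a c) := by
  have hab : Deriv Γ (impl a (impl b c)) := .mp (.ax1 Γ _ _) h1
  exact .mp (.mp (.ax2 Γ a b c) hab) h2

theorem neg_absorption_theorem (α β : Fm) :
    Deriv ∅ (impl (neg (conj α (disj α β))) (neg α)) := by
  -- ∼(α∨β) → (∼α ∧ ∼β)
  have h1 : Deriv ∅ (impl (neg (disj α β)) (conj (neg α) (neg β))) :=
    .mp (.ax3 _ _ _) (.ax9 ∅ α β)
  -- ∼(α∨β) → ∼α
  have h3 : Deriv ∅ (impl (neg (disj α β)) (neg α)) :=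
    Deriv.comp (.ax3 _ _ _) h1
  -- ∼((α∨β)∧α) → ∼α
  have h4 : Deriv ∅ (impl (neg (conj (disj α β) α)) (neg α)) :=
    .mp (.ax20 ∅ (disj α β) α) h3
  exact Deriv.comp h4 (.ax19 ∅ α (disj α β))
end
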